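/- Let ρ ∈ [0,1), J = 2·⌈1/(1-ρ)⌉, and α_n = 1 - 2/((1-ρ)(n+J)). For the SAM iteration x_0 = x, x_{n+1} = (1-α_n)f(x_n) + α_n T(x_n) in a W-hyperbolic space, with p a fixed point of T and M ≥ max{d(x,p), d(p,f(p))/(1-ρ)}, it holds for all n that d(T(x_n), x_n) ≤ 2M(J+2)/((1-ρ)(n+J)). -/

import Mathlib

/-!
Along the SAM iteration every point stays within `M` of `p`, so `d(f xₙ, T xₙ) ≤ 2M`. With
`c = 1 - ρ` and `m = n + J`, the W-hyperbolic axioms give the recursion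
`d(xₙ₊₂, xₙ₊₁) ≤ (1 - 2/(m+1)) d(xₙ₊₁, xₙ) + 4M/(c m (m+1))`, whose solution is
`d(xₙ₊₁, xₙ) ≤ 2MJ/(c m)` because `J ≥ 2`. Finally
`d(T xₙ, xₙ) ≤ d(T xₙ, xₙ₊₁) + d(xₙ₊₁, xₙ) ≤ (1 - αₙ) 2M + 2MJ/(c m)`.
-/

open Set

lemma le_div_natCast_add_of_recurrence {a : ℕ → ℝ} {K m₀ : ℝ} (hm₀ : 1 ≤ m₀)
    (h0 : a 0 ≤ K / m₀)
    (hrec : ∀ n : ℕ, a (n + 1) ≤ (1 - 2 / (n + m₀ + 1)) * a n + K / ((n + m₀) * (n + m₀ + 1))) :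
    ∀ n : ℕ, a n ≤ K / (n + m₀) := by
  intro n
  induction n with
  | zero => simpa using h0
  | succ n ih =>
    have hm : 1 ≤ (n : ℝ) + m₀ := by linarith [n.cast_nonneg (α := ℝ)]
    have hcoef : 0 ≤ 1 - 2 / (n + m₀ + 1) := by
      rw [sub_nonneg, div_le_one (by linarith)]; linarith
    calc a (n + 1) ≤ (1 - 2 / (n + m₀ + 1)) * a n + K / ((n + m₀) * (n + m₀ + 1)) := hrec n
      _ ≤ (1 - 2 / (n + m₀ + 1)) * (K / (n + m₀)) + K / ((n + m₀) * (n + m₀ + 1)) := by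
        gcongr
      _ = K / ((n + 1 : ℕ) + m₀) := by
        push_cast
        field_simp
        ring

lemma one_sub_two_div_mul_add_mem_Icc {ρ J : ℝ} (hρ : ρ < 1) (hJ : 2 ≤ (1 - ρ) * J) (n : ℕ) :
    1 - 2 / ((1 - ρ) * (n + J)) ∈ Icc (0:ℝ) 1 := by
  have hs : 2 ≤ (1 - ρ) * (n + J) := by nlinarith [n.cast_nonneg (α := ℝ)]
  constructor
  · rw [sub_nonneg, div_le_one (by linarith)]; exact hs
  · have : 0 ≤ 2 / ((1 - ρ) * (n + J)) := div_nonneg zero_le_two (by linarith)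
    linarith

lemma one_sub_two_div_mul_add_succ_sub {ρ J : ℝ} (hρ : ρ < 1) (hJ : 0 < J) (n : ℕ) :
    (1 - 2 / ((1 - ρ) * ((n + 1 : ℕ) + J))) - (1 - 2 / ((1 - ρ) * (n + J)))
      = 2 / ((1 - ρ) * ((n + J) * (n + J + 1))) := by
  have : (0:ℝ) < n + J := by positivity
  have : 0 < 1 - ρ := by linarith
  push_cast
  field_simp
  ring

lemma sam_mem {X : Type*} {W : X → X → ℝ → X} {C : Set X} {T f : X → X} {α : ℕ → ℝ}
    {x : ℕ → X} (hC : ∀ x ∈ C, ∀ y ∈ C, ∀ l ∈ Icc (0:ℝ) 1, W x y l ∈ C)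
    (hTC : ∀ x ∈ C, T x ∈ C) (hfC : ∀ x ∈ C, f x ∈ C) (hα : ∀ n, α n ∈ Icc (0:ℝ) 1)
    (hx0 : x 0 ∈ C) (hxrec : ∀ n, x (n + 1) = W (f (x n)) (T (x n)) (α n)) :
    ∀ n, x n ∈ C := by
  intro n
  induction n with
  | zero => exact hx0
  | succ n ih => rw [hxrec]; exact hC _ (hfC _ ih) _ (hTC _ ih) _ (hα n)

section WHyperbolic

variable {X : Type*} [MetricSpace X] {W : X → X → ℝ → X}

lemma dist_W_le_of_le
    (W1 : ∀ (x y z : X), ∀ l ∈ Icc (0:ℝ) 1, dist z (W x y l) ≤ (1 - l) * dist z x + l * dist z y)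
    {x y z : X} {l R : ℝ} (hl : l ∈ Icc (0:ℝ) 1) (hx : dist z x ≤ R) (hy : dist z y ≤ R) :
    dist z (W x y l) ≤ R := by
  obtain ⟨hl0, hl1⟩ := hl
  calc dist z (W x y l) ≤ (1 - l) * dist z x + l * dist z y := W1 x y z l ⟨hl0, hl1⟩
    _ ≤ (1 - l) * R + l * R := by gcongr
    _ = R := by ring

lemma dist_W_right_le
    (W1 : ∀ (x y z : X), ∀ l ∈ Icc (0:ℝ) 1, dist z (W x y l) ≤ (1 - l) * dist z x + l * dist z y)
    (x y : X) {l : ℝ} (hl : l ∈ Icc (0:ℝ) 1) :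
    dist y (W x y l) ≤ (1 - l) * dist y x := by
  simpa using W1 x y y l hl

variable {C : Set X} {T f : X → X} {ρ : ℝ} {α : ℕ → ℝ} {x : ℕ → X}

lemma dist_apply_le_of_contraction (hf : ∀ x ∈ C, ∀ y ∈ C, dist (f x) (f y) ≤ ρ * dist x y)
    (hρ : 0 ≤ ρ) {p y : X} (hp : p ∈ C) (hy : y ∈ C) {M : ℝ}
    (hpf : dist p (f p) ≤ (1 - ρ) * M) (hpy : dist p y ≤ M) :
    dist p (f y) ≤ M :=
  calc dist p (f y) ≤ dist p (f p) + dist (f p) (f y) := dist_triangle _ _ _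
    _ ≤ (1 - ρ) * M + ρ * M := by gcongr; exact (hf p hp y hy).trans (by gcongr)
    _ = M := by ring

lemma dist_apply_le_of_isFixedPt (hT : ∀ x ∈ C, ∀ y ∈ C, dist (T x) (T y) ≤ dist x y)
    {p y : X} (hp : p ∈ C) (hfix : T p = p) (hy : y ∈ C) :
    dist p (T y) ≤ dist p y := by
  simpa [hfix] using hT p hp y hy

lemma dist_sam_le
    (W1 : ∀ (x y z : X), ∀ l ∈ Icc (0:ℝ) 1, dist z (W x y l) ≤ (1 - l) * dist z x + l * dist z y)
    (hT : ∀ x ∈ C, ∀ y ∈ C, dist (T x) (T y) ≤ dist x y)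
    (hf : ∀ x ∈ C, ∀ y ∈ C, dist (f x) (f y) ≤ ρ * dist x y) (hρ : 0 ≤ ρ)
    (hα : ∀ n, α n ∈ Icc (0:ℝ) 1) (hxC : ∀ n, x n ∈ C)
    (hxrec : ∀ n, x (n + 1) = W (f (x n)) (T (x n)) (α n))
    {p : X} (hp : p ∈ C) (hfix : T p = p) {M : ℝ}
    (hpf : dist p (f p) ≤ (1 - ρ) * M) (h0 : dist p (x 0) ≤ M) :
    ∀ n, dist p (x n) ≤ M := by
  intro n
  induction n with
  | zero => exact h0
  | succ n ih =>
    rw [hxrec]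
    exact dist_W_le_of_le W1 (hα n) (dist_apply_le_of_contraction hf hρ hp (hxC n) hpf ih)
      ((dist_apply_le_of_isFixedPt hT hp hfix (hxC n)).trans ih)

lemma dist_sam_succ_succ_le
    (W2 : ∀ (x y : X), ∀ l ∈ Icc (0:ℝ) 1, ∀ m ∈ Icc (0:ℝ) 1,
      dist (W x y l) (W x y m) = |l - m| * dist x y)
    (W4 : ∀ (x y z w : X), ∀ l ∈ Icc (0:ℝ) 1,
      dist (W x z l) (W y w l) ≤ (1 - l) * dist x y + l * dist z w)
    (hT : ∀ x ∈ C, ∀ y ∈ C, dist (T x) (T y) ≤ dist x y)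
    (hf : ∀ x ∈ C, ∀ y ∈ C, dist (f x) (f y) ≤ ρ * dist x y)
    (hα : ∀ n, α n ∈ Icc (0:ℝ) 1) (hxC : ∀ n, x n ∈ C)
    (hxrec : ∀ n, x (n + 1) = W (f (x n)) (T (x n)) (α n)) (n : ℕ) :
    dist (x (n + 2)) (x (n + 1)) ≤ (1 - (1 - α (n + 1)) * (1 - ρ)) * dist (x (n + 1)) (x n)
      + |α (n + 1) - α n| * dist (f (x n)) (T (x n)) := by
  obtain ⟨ha0, ha1⟩ := hα (n + 1)
  set b := dist (x (n + 1)) (x n)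
  -- compare `xₙ₊₂` with `W (f xₙ) (T xₙ) αₙ₊₁`, which has the same parameter as `xₙ₊₂` and the
  -- same endpoints as `xₙ₊₁`
  calc dist (x (n + 2)) (x (n + 1))
      ≤ dist (x (n + 2)) (W (f (x n)) (T (x n)) (α (n + 1)))
        + dist (W (f (x n)) (T (x n)) (α (n + 1))) (x (n + 1)) := dist_triangle _ _ _
    _ ≤ ((1 - α (n + 1)) * dist (f (x (n + 1))) (f (x n))
          + α (n + 1) * dist (T (x (n + 1))) (T (x n)))
        + |α (n + 1) - α n| * dist (f (x n)) (T (x n)) := by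
      rw [hxrec (n + 1), hxrec n, W2 _ _ _ (hα (n + 1)) _ (hα n)]
      gcongr
      exact W4 _ _ _ _ _ (hα (n + 1))
    _ ≤ ((1 - α (n + 1)) * (ρ * b) + α (n + 1) * b)
        + |α (n + 1) - α n| * dist (f (x n)) (T (x n)) := by
      gcongr
      · exact hf _ (hxC _) _ (hxC _)
      · exact hT _ (hxC _) _ (hxC _)
    _ = _ := by ring

lemma dist_sam_succ_le
    (W2 : ∀ (x y : X), ∀ l ∈ Icc (0:ℝ) 1, ∀ m ∈ Icc (0:ℝ) 1,
      dist (W x y l) (W x y m) = |l - m| * dist x y)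
    (W4 : ∀ (x y z w : X), ∀ l ∈ Icc (0:ℝ) 1,
      dist (W x z l) (W y w l) ≤ (1 - l) * dist x y + l * dist z w)
    (hT : ∀ x ∈ C, ∀ y ∈ C, dist (T x) (T y) ≤ dist x y)
    (hf : ∀ x ∈ C, ∀ y ∈ C, dist (f x) (f y) ≤ ρ * dist x y) (hρ : ρ ∈ Ico (0:ℝ) 1)
    {J : ℝ} (hJ : 2 ≤ (1 - ρ) * J) (hα : ∀ n, α n = 1 - 2 / ((1 - ρ) * (n + J)))
    (hxC : ∀ n, x n ∈ C) (hxrec : ∀ n, x (n + 1) = W (f (x n)) (T (x n)) (α n)) {M : ℝ}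
    (hfT : ∀ n, dist (f (x n)) (T (x n)) ≤ 2 * M) (h0 : dist (x 1) (x 0) ≤ 2 * M) (n : ℕ) :
    dist (x (n + 1)) (x n) ≤ 2 * M * J / ((1 - ρ) * (n + J)) := by
  obtain ⟨hρ0, hρ1⟩ := hρ
  have hc : 0 < 1 - ρ := by linarith
  have hJ2 : 2 ≤ J := by nlinarith
  have hM : 0 ≤ M := by linarith [dist_nonneg (x := x 1) (y := x 0)]
  have hαI : ∀ n, α n ∈ Icc (0:ℝ) 1 := fun n => hα n ▸ one_sub_two_div_mul_add_mem_Icc hρ1 hJ n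
  have hrate := le_div_natCast_add_of_recurrence (a := fun n => dist (x (n + 1)) (x n))
    (K := 2 * M * J / (1 - ρ)) (m₀ := J) (by linarith) ?_ ?_ n
  · rw [div_div] at hrate
    simpa only [mul_comm (1 - ρ)] using hrate
  · calc dist (x (0 + 1)) (x 0) ≤ 2 * M := h0
      _ ≤ 2 * M * J / (1 - ρ) / J := by
        rw [le_div_iff₀ (by linarith), le_div_iff₀ hc]
        nlinarith [mul_nonneg hM (by linarith : (0:ℝ) ≤ J)]
  · intro n
    have hm : (0:ℝ) < n + J := by positivity
    have hcontr : (1 - α (n + 1)) * (1 - ρ) = 2 / (n + J + 1) := by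
      rw [hα]; push_cast; field_simp; ring
    have hΔ : |α (n + 1) - α n| = 2 / ((1 - ρ) * ((n + J) * (n + J + 1))) := by
      rw [hα, hα, one_sub_two_div_mul_add_succ_sub hρ1 (by linarith), abs_of_nonneg (by positivity)]
    calc dist (x (n + 1 + 1)) (x (n + 1))
        ≤ (1 - (1 - α (n + 1)) * (1 - ρ)) * dist (x (n + 1)) (x n)
          + |α (n + 1) - α n| * dist (f (x n)) (T (x n)) :=
          dist_sam_succ_succ_le W2 W4 hT hf hαI hxC hxrec n
      _ ≤ (1 - 2 / (n + J + 1)) * dist (x (n + 1)) (x n)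
          + 2 / ((1 - ρ) * ((n + J) * (n + J + 1))) * (2 * M) := by
        rw [hcontr, hΔ]; gcongr; exact hfT n
      _ ≤ (1 - 2 / (n + J + 1)) * dist (x (n + 1)) (x n)
          + 2 * M * J / (1 - ρ) / ((n + J) * (n + J + 1)) := by
        rw [div_div, div_mul_eq_mul_div]
        gcongr _ + ?_ / _
        nlinarith

lemma dist_apply_sam_le
    (W1 : ∀ (x y z : X), ∀ l ∈ Icc (0:ℝ) 1, dist z (W x y l) ≤ (1 - l) * dist z x + l * dist z y)
    (W2 : ∀ (x y : X), ∀ l ∈ Icc (0:ℝ) 1, ∀ m ∈ Icc (0:ℝ) 1,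
      dist (W x y l) (W x y m) = |l - m| * dist x y)
    (W4 : ∀ (x y z w : X), ∀ l ∈ Icc (0:ℝ) 1,
      dist (W x z l) (W y w l) ≤ (1 - l) * dist x y + l * dist z w)
    (hC : ∀ x ∈ C, ∀ y ∈ C, ∀ l ∈ Icc (0:ℝ) 1, W x y l ∈ C)
    (hTC : ∀ x ∈ C, T x ∈ C) (hfC : ∀ x ∈ C, f x ∈ C)
    (hT : ∀ x ∈ C, ∀ y ∈ C, dist (T x) (T y) ≤ dist x y)
    (hf : ∀ x ∈ C, ∀ y ∈ C, dist (f x) (f y) ≤ ρ * dist x y) (hρ : ρ ∈ Ico (0:ℝ) 1)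
    {J : ℝ} (hJ : 2 ≤ (1 - ρ) * J) (hα : ∀ n, α n = 1 - 2 / ((1 - ρ) * (n + J)))
    (hx0 : x 0 ∈ C) (hxrec : ∀ n, x (n + 1) = W (f (x n)) (T (x n)) (α n))
    {p : X} (hp : p ∈ C) (hfix : T p = p) {M : ℝ}
    (hpf : dist p (f p) ≤ (1 - ρ) * M) (hpx : dist p (x 0) ≤ M) (n : ℕ) :
    dist (T (x n)) (x n) ≤ 2 * M * (J + 2) / ((1 - ρ) * (n + J)) := by
  have hαI : ∀ n, α n ∈ Icc (0:ℝ) 1 := fun n => hα n ▸ one_sub_two_div_mul_add_mem_Icc hρ.2 hJ n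
  have hxC := sam_mem hC hTC hfC hαI hx0 hxrec
  have hbdd := dist_sam_le W1 hT hf hρ.1 hαI hxC hxrec hp hfix hpf hpx
  have hfT : ∀ n, dist (f (x n)) (T (x n)) ≤ 2 * M := fun n =>
    (dist_triangle_left _ _ p).trans <| by
      linarith [dist_apply_le_of_contraction hf hρ.1 hp (hxC n) hpf (hbdd n),
        (dist_apply_le_of_isFixedPt hT hp hfix (hxC n)).trans (hbdd n)]
  have h01 : dist (x 1) (x 0) ≤ 2 * M :=
    (dist_triangle_left _ _ p).trans (by linarith [hbdd 0, hbdd 1])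
  obtain ⟨ha0, ha1⟩ := hαI n
  calc dist (T (x n)) (x n) ≤ dist (T (x n)) (x (n + 1)) + dist (x (n + 1)) (x n) :=
        dist_triangle _ _ _
    _ ≤ (1 - α n) * (2 * M) + 2 * M * J / ((1 - ρ) * (n + J)) := by
      gcongr
      · rw [hxrec]
        exact (dist_W_right_le W1 _ _ (hαI n)).trans (by rw [dist_comm]; gcongr; exact hfT n)
      · exact dist_sam_succ_le W2 W4 hT hf hρ hJ hα hxC hxrec hfT h01 n
    _ = 2 * M * (J + 2) / ((1 - ρ) * (n + J)) := by
      have : (0:ℝ) < 1 - ρ := by linarith [hρ.2]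
      have : (0:ℝ) < n + J := by nlinarith [n.cast_nonneg (α := ℝ)]
      rw [hα]
      field_simp
      ring

end WHyperbolic

theorem stmt8_general {X : Type*} [MetricSpace X] (W : X → X → ℝ → X)
    (W1 : ∀ (x y z : X), ∀ l ∈ Set.Icc (0:ℝ) 1,
      dist z (W x y l) ≤ (1 - l) * dist z x + l * dist z y)
    (W2 : ∀ (x y : X), ∀ l ∈ Set.Icc (0:ℝ) 1, ∀ m ∈ Set.Icc (0:ℝ) 1,
      dist (W x y l) (W x y m) = |l - m| * dist x y)
    (W4 : ∀ (x y z w : X), ∀ l ∈ Set.Icc (0:ℝ) 1,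
      dist (W x z l) (W y w l) ≤ (1 - l) * dist x y + l * dist z w)
    (C : Set X)
    (hC : ∀ x ∈ C, ∀ y ∈ C, ∀ l ∈ Set.Icc (0:ℝ) 1, W x y l ∈ C)
    (T f : X → X) (hTC : ∀ x ∈ C, T x ∈ C) (hfC : ∀ x ∈ C, f x ∈ C)
    (hT : ∀ x ∈ C, ∀ y ∈ C, dist (T x) (T y) ≤ dist x y)
    (ρ : ℝ) (hρ : ρ ∈ Set.Ico (0:ℝ) 1)
    (hf : ∀ x ∈ C, ∀ y ∈ C, dist (f x) (f y) ≤ ρ * dist x y)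
    (α : ℕ → ℝ)
    (x₀ : X) (hx₀ : x₀ ∈ C) (x : ℕ → X) (hx0 : x 0 = x₀)
    (J : ℕ) (hJ : J = 2 * ⌈1 / (1 - ρ)⌉₊)
    (hα : ∀ n, α n = 1 - 2 / ((1 - ρ) * (n + J)))
    (hxrec : ∀ n, x (n + 1) = W (f (x n)) (T (x n)) (α n))
    (p : X) (hp : p ∈ C) (hfix : T p = p)
    (M : ℝ) (hM1 : dist x₀ p ≤ M) (hM2 : dist p (f p) / (1 - ρ) ≤ M) :
    ∀ n, dist (T (x n)) (x n) ≤ (2 * M * (J + 2)) / ((1 - ρ) * (n + J)) := by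
  have hc : 0 < 1 - ρ := by linarith [hρ.2]
  have hcJ : 2 ≤ (1 - ρ) * (J : ℝ) := by
    rw [hJ]; push_cast
    calc (2:ℝ) = (1 - ρ) * (2 * (1 / (1 - ρ))) := by field_simp
      _ ≤ (1 - ρ) * (2 * ⌈1 / (1 - ρ)⌉₊) := by gcongr; exact Nat.le_ceil _
  have hpf : dist p (f p) ≤ (1 - ρ) * M := by rwa [div_le_iff₀ hc, mul_comm] at hM2
  subst hx0
  exact dist_apply_sam_le W1 W2 W4 hC hTC hfC hT hf hρ hcJ hα hx₀ hxrec hp hfix hpf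
    (by rwa [dist_comm])

theorem stmt8 {X : Type*} [MetricSpace X] (W : X → X → ℝ → X)
    (W1 : ∀ (x y z : X), ∀ l ∈ Set.Icc (0:ℝ) 1,
      dist z (W x y l) ≤ (1 - l) * dist z x + l * dist z y)
    (W2 : ∀ (x y : X), ∀ l ∈ Set.Icc (0:ℝ) 1, ∀ m ∈ Set.Icc (0:ℝ) 1,
      dist (W x y l) (W x y m) = |l - m| * dist x y)
    (W3 : ∀ (x y : X), ∀ l ∈ Set.Icc (0:ℝ) 1, W x y l = W y x (1 - l))
    (W4 : ∀ (x y z w : X), ∀ l ∈ Set.Icc (0:ℝ) 1,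
      dist (W x z l) (W y w l) ≤ (1 - l) * dist x y + l * dist z w)
    (C : Set X)
    (hC : ∀ x ∈ C, ∀ y ∈ C, ∀ l ∈ Set.Icc (0:ℝ) 1, W x y l ∈ C)
    (T f : X → X) (hTC : ∀ x ∈ C, T x ∈ C) (hfC : ∀ x ∈ C, f x ∈ C)
    (hT : ∀ x ∈ C, ∀ y ∈ C, dist (T x) (T y) ≤ dist x y)
    (ρ : ℝ) (hρ : ρ ∈ Set.Ico (0:ℝ) 1)
    (hf : ∀ x ∈ C, ∀ y ∈ C, dist (f x) (f y) ≤ ρ * dist x y)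
    (α : ℕ → ℝ)
    (x₀ : X) (hx₀ : x₀ ∈ C) (x : ℕ → X) (hx0 : x 0 = x₀)
    (J : ℕ) (hJ : J = 2 * ⌈1 / (1 - ρ)⌉₊)
    (hα : ∀ n, α n = 1 - 2 / ((1 - ρ) * (n + J)))
    (hxrec : ∀ n, x (n + 1) = W (f (x n)) (T (x n)) (α n))
    (p : X) (hp : p ∈ C) (hfix : T p = p)
    (M : ℝ) (hM : 0 < M) (hM1 : dist x₀ p ≤ M) (hM2 : dist p (f p) / (1 - ρ) ≤ M) :
    ∀ n, dist (T (x n)) (x n) ≤ (2 * M * (J + 2)) / ((1 - ρ) * (n + J)) :=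
  stmt8_general W W1 W2 W4 C hC T f hTC hfC hT ρ hρ hf α x₀ hx₀ x hx0 J hJ hα hxrec p hp hfix M hM1
    hM2
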